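/- Let d be a natural number and let D(t) = Σ_{n≥0} C(2n+d, n)·C(n+d, d)·t^n ∈ ℚ[[t]] (the diagonal of 1/(1−x−y)^{d+1}). Then the following identity of formal power series holds in ℚ[[t]]: (1 − 4t)^{2d+1} · D(t)² = ( Σ_{k=0}^{⌊d/2⌋} C(d, 2k)·C(2k, k)·t^k )². In other words, D(t) is a root of the polynomial (1−4t)^{2d+1}·z² − (Σ_{k=0}^{⌊d/2⌋} C(d,2k)·C(2k,k)·t^k)² ∈ ℚ[t][z]. -/

import Mathlib

/-!
Write `u = 1 - 4X`, `D_d` for the diagonal series and `P_d = ∑ C(d,2k) C(2k,k) X^k` (the constant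
term of `(x + 1 + X/x)^d`). Both families satisfy first-order recurrences in `d` involving the
Euler operator `X d/dX`, and these propagate `u^d D_d = P_d D_0` from `d` to `d + 1`. For `d = 0`,
`D_0 = ∑ C(2n,n) X^n` satisfies `u D_0' = 2 D_0`, so `u D_0^2` has zero derivative and constant
term one: `u D_0^2 = 1`. Squaring the first identity and multiplying by `u` gives the claim.
-/

open PowerSeries

theorem Nat.add_one_mul_choose_add_one_add_mul_choose (d j : ℕ) :
    (j + 1) * d.choose (j + 1) + j * d.choose j = d * d.choose j := by
  have h := Nat.add_one_mul_choose_eq d j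
  rw [Nat.choose_succ_succ'] at h
  linear_combination h.symm

theorem Nat.diagonal_coeff_recurrence (n d : ℕ) :
    (d + 1) * ((2 * n + d + 1).choose n * (n + d + 1).choose (d + 1)) =
      (2 * n + d + 1) * ((2 * n + d).choose n * (n + d).choose d) := by
  have h₁ := Nat.add_one_mul_choose_eq (n + d) d
  have h₂ := Nat.choose_mul_succ_eq (2 * n + d) n
  rw [show 2 * n + d + 1 - n = n + d + 1 by omega] at h₂
  linear_combination (2 * n + d + 1).choose n * h₁.symm + (n + d).choose d * h₂.symm

theorem Nat.trinomial_coeff_recurrence (d k : ℕ) :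
    (d + 1) * ((d + 1).choose (2 * k + 2) * (2 * k + 2).choose (k + 1)) +
        8 * k * (d.choose (2 * k) * (2 * k).choose k) =
      (d + 2 * k + 3) * (d.choose (2 * k + 2) * (2 * k + 2).choose (k + 1)) +
        4 * d * (d.choose (2 * k) * (2 * k).choose k) := by
  have hc := Nat.succ_mul_centralBinom_succ k
  rw [Nat.centralBinom, Nat.centralBinom, show 2 * (k + 1) = 2 * k + 2 by ring] at hc
  have h₀ := Nat.add_one_mul_choose_add_one_add_mul_choose d (2 * k)
  have h₁ : (2 * k + 2) * d.choose (2 * k + 2) + (2 * k + 1) * d.choose (2 * k + 1) =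
      d * d.choose (2 * k + 1) :=
    Nat.add_one_mul_choose_add_one_add_mul_choose d (2 * k + 1)
  rw [Nat.choose_succ_succ' d (2 * k + 1)]
  linear_combination 2 * d.choose (2 * k + 1) * hc + 4 * (2 * k).choose k * h₀ +
    (2 * k + 2).choose (k + 1) * h₁.symm

namespace PowerSeries

section Semiring

variable {R : Type*} [Semiring R]

theorem coeff_natCast_mul (m n : ℕ) (f : R⟦X⟧) : coeff n ((m : R⟦X⟧) * f) = m * coeff n f := by
  rw [← map_natCast (C (R := R)), coeff_C_mul]

theorem coeff_ofNat_mul (m n : ℕ) [m.AtLeastTwo] (f : R⟦X⟧) :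
    coeff n ((no_index (OfNat.ofNat m) : R⟦X⟧) * f) = OfNat.ofNat m * coeff n f := by
  rw [← map_ofNat (C (R := R)), coeff_C_mul]

end Semiring

section CommSemiring

variable {R : Type*} [CommSemiring R]

instance [CharZero R] : CharZero R⟦X⟧ :=
  charZero_of_injective_algebraMap C_injective

theorem coeff_X_mul_derivative (f : R⟦X⟧) (n : ℕ) :
    coeff n (X * d⁄dX R f) = n * coeff n f := by
  cases n with
  | zero => simp
  | succ n => rw [coeff_succ_X_mul, coeff_derivative, mul_comm]; push_cast; rfl

theorem mul_derivative_pow (f : R⟦X⟧) (n : ℕ) :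
    f * d⁄dX R (f ^ n) = n * d⁄dX R f * f ^ n := by
  cases n with
  | zero => simp
  | succ n => rw [derivative_pow, Nat.add_sub_cancel, pow_succ]; ring

end CommSemiring

end PowerSeries

theorem derivative_one_sub_four_X : d⁄dX ℚ (1 - 4 * X : ℚ⟦X⟧) = -4 := by
  rw [← map_ofNat C 4]
  simp

noncomputable def diagSeries (d : ℕ) : ℚ⟦X⟧ :=
  mk fun n => ((2 * n + d).choose n * (n + d).choose d : ℚ)

noncomputable def trinomSeries (d : ℕ) : ℚ⟦X⟧ :=
  mk fun k => (d.choose (2 * k) * (2 * k).choose k : ℚ)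

theorem trinomSeries_zero : trinomSeries 0 = 1 := by
  ext (_ | k) <;> simp [trinomSeries, coeff_one, Nat.choose_eq_zero_of_lt]

theorem sum_choose_mul_centralBinom_eq_trinomSeries (d : ℕ) :
    ∑ k ∈ Finset.range (d / 2 + 1),
        C (d.choose (2 * k) * (2 * k).choose k : ℚ) * X ^ k = trinomSeries d := by
  ext n
  simp only [map_sum, coeff_C_mul_X_pow, trinomSeries, coeff_mk, Finset.sum_ite_eq,
    Finset.mem_range]
  split_ifs with hn
  · rfl
  · rw [Nat.choose_eq_zero_of_lt (by omega : d < 2 * n), Nat.cast_zero, zero_mul]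

theorem one_sub_four_X_mul_derivative_diagSeries_zero :
    (1 - 4 * X) * d⁄dX ℚ (diagSeries 0) = 2 * diagSeries 0 := by
  ext n
  have h := congrArg (Nat.cast : ℕ → ℚ) (Nat.succ_mul_centralBinom_succ n)
  simp only [Nat.centralBinom] at h
  simp only [diagSeries, add_zero, Nat.choose_zero_right, Nat.cast_one, mul_one, sub_mul, one_mul,
    mul_assoc, map_sub, coeff_derivative, coeff_mk, coeff_ofNat_mul, coeff_X_mul_derivative]
  rw [show 2 * (n + 1) = 2 * n + 2 by ring] at h ⊢
  push_cast at h ⊢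
  linear_combination h

theorem add_one_mul_diagSeries_succ (d : ℕ) :
    (d + 1 : ℚ⟦X⟧) * diagSeries (d + 1) =
      2 * (X * d⁄dX ℚ (diagSeries d)) + (d + 1 : ℚ⟦X⟧) * diagSeries d := by
  ext n
  have h := congrArg (Nat.cast : ℕ → ℚ) (Nat.diagonal_coeff_recurrence n d)
  simp only [diagSeries, add_mul, one_mul, map_add, coeff_natCast_mul, coeff_mk, coeff_ofNat_mul,
    coeff_X_mul_derivative]
  rw [show 2 * n + (d + 1) = 2 * n + d + 1 by ring, show n + (d + 1) = n + d + 1 by ring]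
  push_cast at h ⊢
  linear_combination h

theorem add_one_mul_trinomSeries_succ (d : ℕ) :
    (d + 1 : ℚ⟦X⟧) * trinomSeries (d + 1) + 8 * X * (X * d⁄dX ℚ (trinomSeries d)) =
      (d + 1 : ℚ⟦X⟧) * trinomSeries d + (4 * d : ℚ⟦X⟧) * X * trinomSeries d +
        2 * (X * d⁄dX ℚ (trinomSeries d)) := by
  ext (_ | k)
  · simp [add_mul, mul_assoc, trinomSeries]
  · have h := congrArg (Nat.cast : ℕ → ℚ) (Nat.trinomial_coeff_recurrence d k)
    simp only [trinomSeries, add_mul, one_mul, mul_assoc, map_add, coeff_natCast_mul, coeff_mk,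
      coeff_ofNat_mul, coeff_succ_X_mul, coeff_X_mul_derivative, coeff_derivative]
    rw [show 2 * (k + 1) = 2 * k + 2 by ring]
    push_cast at h ⊢
    linear_combination h

theorem one_sub_four_X_mul_diagSeries_zero_sq : (1 - 4 * X) * diagSeries 0 ^ 2 = 1 := by
  refine derivative.ext ?_ ?_
  · simp only [Derivation.leibniz, derivative_one_sub_four_X, sq, smul_eq_mul,
      Derivation.map_one_eq_zero]
    linear_combination 2 * diagSeries 0 * one_sub_four_X_mul_derivative_diagSeries_zero
  · simp [diagSeries]

theorem one_sub_four_X_pow_mul_diagSeries (d : ℕ) :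
    (1 - 4 * X) ^ d * diagSeries d = trinomSeries d * diagSeries 0 := by
  induction d with
  | zero => simp [trinomSeries_zero]
  | succ d ih =>
    have hθ := congrArg (fun f => X * d⁄dX ℚ f) ih
    simp only [Derivation.leibniz, smul_eq_mul] at hθ
    have hpow := mul_derivative_pow (1 - 4 * X : ℚ⟦X⟧) d
    rw [derivative_one_sub_four_X] at hpow
    apply mul_left_cancel₀ (Nat.cast_add_one_ne_zero d)
    linear_combination (1 - 4 * X) ^ (d + 1) * add_one_mul_diagSeries_succ d -
      diagSeries 0 * add_one_mul_trinomSeries_succ d + 2 * (1 - 4 * X) * hθ -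
      2 * X * diagSeries d * hpow +
      2 * X * trinomSeries d * one_sub_four_X_mul_derivative_diagSeries_zero +
      ((d + 1 : ℚ⟦X⟧) * (1 - 4 * X) + 8 * d * X) * ih

theorem diag_satisfies_quadratic (d : ℕ) :
    ((1 - 4 * PowerSeries.X : PowerSeries ℚ) ^ (2 * d + 1)) *
        (PowerSeries.mk fun n : ℕ =>
          (Nat.choose (2 * n + d) n * Nat.choose (n + d) d : ℚ)) ^ 2 =
      (∑ k ∈ Finset.range (d / 2 + 1),
        PowerSeries.C (Nat.choose d (2 * k) * Nat.choose (2 * k) k : ℚ) *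
          PowerSeries.X ^ k) ^ 2 := by
  rw [sum_choose_mul_centralBinom_eq_trinomSeries]
  change _ * diagSeries d ^ 2 = _
  calc (1 - 4 * X) ^ (2 * d + 1) * diagSeries d ^ 2
      = ((1 - 4 * X) ^ d * diagSeries d) ^ 2 * (1 - 4 * X) := by ring
    _ = trinomSeries d ^ 2 * ((1 - 4 * X) * diagSeries 0 ^ 2) := by
      rw [one_sub_four_X_pow_mul_diagSeries]; ring
    _ = trinomSeries d ^ 2 := by rw [one_sub_four_X_mul_diagSeries_zero_sq, mul_one]
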